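/- Fix α > 0 and let f be the function determined by 1/f(z) = (1/(2π))·[ log((z+α)/z) + (2π−α)/(z+α) ] for z in the upper half-plane, extended continuously to the real axis near 0 from above, and write f(x) = u(x) + i·v(x) for real x < 0 near 0. Then v(x) = 2π²/log²|x| + O(1/log³|x|) as x → 0⁻. -/

import Mathlib

open Complex Filter Topology

/-- The Christoffel–Schwarz map `f` of the paper:
`1/f(z) = (1/(2π))·[log(z+α) − log z + (2π−α)/(z+α)]`, where `Complex.log`
is the branch with `log i = iπ/2` (the continuous extension to the real axis from above,
with `log((z+α)/z) = log(z+α) − log z` on the upper half-plane). -/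
noncomputable def fCS (α : ℝ) (z : ℂ) : ℂ :=
  2 * (Real.pi : ℂ) /
    (Complex.log (z + (α : ℂ)) - Complex.log z + ((2 * Real.pi - α : ℝ) : ℂ) / (z + (α : ℂ)))

/-! On the arc (`x < 0`, `x + α > 0`) the denominator of `fCS` is `A(x) − iπ` with
`A(x) = B(x) − log |x|` real, where `B(x) = log (x + α) + (2π − α)/(x + α)` stays bounded
near `0`. Hence `v(x) = 2π²/(A(x)² + π²)`, and since `A(x)² = log²|x| + O(log |x|)`, this
differs from `2π²/log²|x|` by `O(1/|log |x||³)`. -/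

lemma sq_div_four_le_sub_sq {B L : ℝ} (h : 2 * |B| ≤ |L|) : L ^ 2 / 4 ≤ (B - L) ^ 2 := by
  have hBL : |L| / 2 ≤ |B - L| := by
    have := abs_sub_abs_le_abs_sub L B
    rw [abs_sub_comm] at this
    linarith
  calc L ^ 2 / 4 = (|L| / 2) ^ 2 := by rw [div_pow, sq_abs]; norm_num
    _ ≤ |B - L| ^ 2 := pow_le_pow_left₀ (by positivity) hBL 2
    _ = (B - L) ^ 2 := sq_abs _

lemma abs_div_sub_sq_add_sub_div_sq_le {B L C c d : ℝ} (hd : 0 ≤ d) (hB : |B| ≤ C)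
    (hL₁ : 1 ≤ |L|) (hLC : 2 * C ≤ |L|) :
    |c / ((B - L) ^ 2 + d) - c / L ^ 2| ≤ 4 * |c| * (3 * C + d) / |L| ^ 3 := by
  have hL : L ≠ 0 := abs_pos.mp (by linarith)
  have hden : L ^ 2 / 4 ≤ (B - L) ^ 2 + d := by
    have := sq_div_four_le_sub_sq (B := B) (L := L) (by linarith)
    linarith
  have hden_pos : 0 < (B - L) ^ 2 + d := lt_of_lt_of_le (by positivity) hden
  have hnum : |2 * B * L - B ^ 2 - d| ≤ (3 * C + d) * |L| := by
    have hB0 : 0 ≤ |B| := abs_nonneg B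
    calc |2 * B * L - B ^ 2 - d| ≤ 2 * |B| * |L| + |B| ^ 2 + d := by
          have h₁ := abs_sub (2 * B * L - B ^ 2) d
          have h₂ := abs_sub (2 * B * L) (B ^ 2)
          simp only [abs_mul, abs_pow, abs_two, abs_of_nonneg hd] at h₁ h₂
          linarith
      _ ≤ (3 * C + d) * |L| := by nlinarith
  have hdiff : c / ((B - L) ^ 2 + d) - c / L ^ 2
      = c * (2 * B * L - B ^ 2 - d) / (((B - L) ^ 2 + d) * L ^ 2) := by
    field_simp
    ring
  rw [hdiff, abs_div, abs_mul, abs_of_pos (mul_pos hden_pos (by positivity))]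
  calc |c| * |2 * B * L - B ^ 2 - d| / (((B - L) ^ 2 + d) * L ^ 2)
      ≤ |c| * ((3 * C + d) * |L|) / (L ^ 2 / 4 * L ^ 2) := by
        have hC : 0 ≤ 3 * C + d := by linarith [abs_nonneg B]
        gcongr
    _ = 4 * |c| * (3 * C + d) / |L| ^ 3 := by
        rw [← sq_abs L]
        field_simp

lemma isBigO_div_sub_sq_add_sub_div_sq {ι : Type*} {l : Filter ι} {B L : ι → ℝ} (c : ℝ)
    {d : ℝ} (hd : 0 ≤ d) (hB : B =O[l] fun _ => (1 : ℝ))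
    (hL : Tendsto (fun x => |L x|) l atTop) :
    (fun x => c / ((B x - L x) ^ 2 + d) - c / L x ^ 2) =O[l] fun x => 1 / L x ^ 3 := by
  obtain ⟨C, hC⟩ := hB.bound
  refine Asymptotics.IsBigO.of_bound (4 * |c| * (3 * C + d)) ?_
  filter_upwards [hC, hL.eventually_ge_atTop 1, hL.eventually_ge_atTop (2 * C)]
    with x hBx hL₁ hLC
  simp only [Real.norm_eq_abs, abs_one, mul_one] at hBx ⊢
  rw [abs_div, abs_one, abs_pow, ← div_eq_mul_one_div]
  exact abs_div_sub_sq_add_sub_div_sq_le hd hBx hL₁ hLC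

lemma fCS_im_of_neg {α x : ℝ} (hx : x < 0) (hxα : 0 < x + α) :
    (fCS α x).im = 2 * Real.pi ^ 2 /
      ((Real.log (x + α) + (2 * Real.pi - α) / (x + α) - Real.log |x|) ^ 2 + Real.pi ^ 2) := by
  set A : ℝ := Real.log (x + α) + (2 * Real.pi - α) / (x + α) - Real.log |x|
  have hlog_add : Complex.log (x + α) = Real.log (x + α) := by
    rw [← ofReal_add, ofReal_log hxα.le]
  have hlog_neg : Complex.log x = Real.log |x| + Real.pi * I := by
    rw [Complex.log, arg_ofReal_of_neg hx, norm_real, Real.norm_eq_abs]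
  have hden : Complex.log (x + α) - Complex.log x + ((2 * Real.pi - α : ℝ) : ℂ) / (x + α)
      = A - Real.pi * I := by
    rw [hlog_add, hlog_neg]
    simp only [A]
    push_cast
    ring
  rw [fCS, hden, div_im]
  simp only [mul_im, re_ofNat, ofReal_im, mul_zero, im_ofNat, ofReal_re, zero_mul, add_zero,
    sub_re, mul_re, I_re, I_im, mul_one, sub_self, sub_zero, normSq_apply, sub_im, zero_sub,
    mul_neg, neg_mul, neg_neg, zero_div]
  ring

/-- `v(x) = 2π²/log²|x| + O(1/log³|x|)` as `x → 0⁻`. -/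
theorem stmt5 (α : ℝ) (hα : 0 < α) :
    (fun x : ℝ => (fCS α (x : ℂ)).im - 2 * Real.pi ^ 2 / (Real.log |x|) ^ 2)
      =O[nhdsWithin 0 (Set.Iio (0 : ℝ))] (fun x : ℝ => 1 / (Real.log |x|) ^ 3) := by
  have hB : (fun x => Real.log (x + α) + (2 * Real.pi - α) / (x + α)) =O[𝓝[<] 0]
      fun _ => (1 : ℝ) := by
    have hcont : ContinuousAt (fun x => Real.log (x + α) + (2 * Real.pi - α) / (x + α)) 0 := by
      fun_prop (disch := simpa using hα.ne')
    exact (hcont.tendsto.mono_left nhdsWithin_le_nhds).isBigO_one (F := ℝ)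
  have hlog : Tendsto (fun x : ℝ => |(Real.log |x|)|) (𝓝[<] 0) atTop := by
    refine tendsto_abs_atBot_atTop.comp ?_
    simpa only [Real.log_abs] using Real.tendsto_log_nhdsLT_zero
  refine (isBigO_div_sub_sq_add_sub_div_sq (2 * Real.pi ^ 2) (sq_nonneg Real.pi) hB
    hlog).congr' ?_ EventuallyEq.rfl
  filter_upwards [self_mem_nhdsWithin,
    nhdsWithin_le_nhds (eventually_gt_nhds (neg_lt_zero.mpr hα))] with x hx hxα
  rw [fCS_im_of_neg hx (by linarith)]
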